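/- (Classical H-index convergence for k-truss, h = 1) Let G be a finite simple graph and for each edge e define the iterates H_l^(0)sup(e) = sup_G(e), the number of triangles of G containing e, and for n ≥ 1, H_l^(n)sup(e) = H({min(H_l^(n-1)sup(e_i), H_l^(n-1)sup(e_j)) : (e_i, e_j) a triangle edge pair of e}). Then for every edge e the sequence (H_l^(n)sup(e))_{n≥0} is eventually constant with limit t(e) − 2, where t(e) is the trussness of e: there exists N such that for all n ≥ N, H_l^(n)sup(e) = t(e) − 2. -/

import Mathlib

/-- The H-index of a finite multiset of natural numbers: the largest `y` such that
at least `y` elements of the multiset are `≥ y` (`0` for the empty multiset). -/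
noncomputable def hIndex (S : Multiset ℕ) : ℕ :=
  sSup {y : ℕ | y ≤ (S.filter (fun x => y ≤ x)).card}

/-- The set of common `h`-neighbors of an edge `e` in `G`: the vertices `w`, distinct from
both endpoints of `e`, that are within distance `h` (i.e. joined by a walk of length `≤ h`)
of both endpoints of `e`. -/
def commonHNbrs {V : Type*} (G : SimpleGraph V) (h : ℕ) (e : Sym2 V) : Set V :=
  {w | ∀ x ∈ e, w ≠ x ∧ ∃ p : G.Walk x w, p.length ≤ h}

/-- The `h`-support of an edge `e` in `G`: the number of common `h`-neighbors of `e`. -/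
noncomputable def hSupport {V : Type*} (G : SimpleGraph V) (h : ℕ) (e : Sym2 V) : ℕ :=
  (commonHNbrs G h e).ncard

/-- The `h`-hop reachable path key of `a, b` with respect to an edge-value function `F`:
the maximum over all (nontrivial) paths `p` from `a` to `b` of length `≤ h` of the minimum
of `F` over the edges of `p`. -/
noncomputable def pathKey {V : Type*} (G : SimpleGraph V) (h : ℕ) (F : Sym2 V → ℕ)
    (a b : V) : ℕ :=
  sSup {m | ∃ p : G.Walk a b, 0 < p.length ∧ p.length ≤ h ∧
    m = sInf {x | ∃ f ∈ p.edges, x = F f}}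

/-- For an edge `e = (u,v)` and a vertex `w`, the value `min (P(u,w), P(v,w))` where `P`
is the path key with respect to `F`. -/
noncomputable def edgeKey {V : Type*} (G : SimpleGraph V) (h : ℕ) (F : Sym2 V → ℕ)
    (e : Sym2 V) (w : V) : ℕ :=
  sInf {m | ∃ x ∈ e, m = pathKey G h F x w}

/-- The higher-order H-index iterates: `HSup G h 0 e = hSupport G h e`, and
`HSup G h (n+1) e = H({min (P(u,w), P(v,w)) : w a common h-neighbor of e})` where `P` is
the path key with respect to `HSup G h n`. -/
noncomputable def HSup {V : Type*} [Fintype V] (G : SimpleGraph V) (h : ℕ) :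
    ℕ → Sym2 V → ℕ
  | 0 => fun e => hSupport G h e
  | n + 1 => fun e =>
      hIndex ((commonHNbrs G h e).toFinite.toFinset.val.map (edgeKey G h (HSup G h n) e))

/-- A graph `S` satisfies the `(k,h)`-truss property if every edge of `S` has `h`-support
at least `k - 2`, computed within `S`. -/
def KHTrussProp {V : Type*} (S : SimpleGraph V) (h k : ℕ) : Prop :=
  ∀ e ∈ S.edgeSet, k ≤ hSupport S h e + 2

/-- `S` is the `(k,h)`-truss of `G`: a maximal subgraph of `G` each of whose edges has
`h`-support at least `k-2` within `S`. -/
def IsKHTruss {V : Type*} (G S : SimpleGraph V) (h k : ℕ) : Prop :=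
  S ≤ G ∧ KHTrussProp S h k ∧
    ∀ T : SimpleGraph V, T ≤ G → KHTrussProp T h k → S ≤ T → T = S

/-- The `h`-trussness `t(e,h)` of an edge `e` of `G`: the largest `k` such that some
`(k,h)`-truss of `G` contains `e`. -/
noncomputable def hTrussness {V : Type*} (G : SimpleGraph V) (h : ℕ) (e : Sym2 V) : ℕ :=
  sSup {k | ∃ S : SimpleGraph V, IsKHTruss G S h k ∧ e ∈ S.edgeSet}

/-- The set of common neighbors of the endpoints of an edge `e` in `G`. -/
def commonNbrs {V : Type*} (G : SimpleGraph V) (e : Sym2 V) : Set V :=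
  {w | ∀ x ∈ e, G.Adj x w}

/-- The classical support of an edge `e` in `G`: the number of common neighbors of its
endpoints, i.e. the number of triangles of `G` containing `e`. -/
noncomputable def suppE {V : Type*} (G : SimpleGraph V) (e : Sym2 V) : ℕ :=
  (commonNbrs G e).ncard

/-- `S` satisfies the `k`-truss property if every edge of `S` lies in at least `k-2`
triangles of `S`. -/
def KTrussProp {V : Type*} (S : SimpleGraph V) (k : ℕ) : Prop :=
  ∀ e ∈ S.edgeSet, k ≤ suppE S e + 2

/-- `S` is a `k`-truss of `G`: a maximal subgraph of `G` in which every edge lies in at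
least `k-2` triangles. -/
def IsKTruss {V : Type*} (G S : SimpleGraph V) (k : ℕ) : Prop :=
  S ≤ G ∧ KTrussProp S k ∧
    ∀ T : SimpleGraph V, T ≤ G → KTrussProp T k → S ≤ T → T = S

/-- The trussness `t(e)` of an edge `e` of `G`. -/
noncomputable def trussnessE {V : Type*} (G : SimpleGraph V) (e : Sym2 V) : ℕ :=
  sSup {k | ∃ S : SimpleGraph V, IsKTruss G S k ∧ e ∈ S.edgeSet}

/-- `min (F (x,w), F (y,w))` over the endpoints `x, y` of `e`: the value contributed by the
triangle edge pair of `e` through the common neighbor `w`. -/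
noncomputable def triKey {V : Type*} (F : Sym2 V → ℕ) (e : Sym2 V) (w : V) : ℕ :=
  sInf {m | ∃ x ∈ e, m = F s(x, w)}

/-- The classical (1-hop) H-index iterates for the `k`-truss model. -/
noncomputable def HlSup {V : Type*} [Fintype V] (G : SimpleGraph V) : ℕ → Sym2 V → ℕ
  | 0 => fun e => suppE G e
  | n + 1 => fun e =>
      hIndex ((commonNbrs G e).toFinite.toFinset.val.map (triKey (HlSup G n) e))


section Aux

open scoped Classical

variable {V : Type*}

/-! ### H-index lemmas -/

lemma hIndexSet_bddAbove (S : Multiset ℕ) :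
    BddAbove {y : ℕ | y ≤ (S.filter (fun x => y ≤ x)).card} :=
  ⟨Multiset.card S, fun y hy => le_trans hy (Multiset.card_le_card (Multiset.filter_le _ _))⟩

lemma le_hIndex (S : Multiset ℕ) (y : ℕ) (h : y ≤ (S.filter (fun x => y ≤ x)).card) :
    y ≤ hIndex S :=
  le_csSup (hIndexSet_bddAbove S) h

lemma hIndex_mem (S : Multiset ℕ) :
    hIndex S ≤ (S.filter (fun x => hIndex S ≤ x)).card :=
  Nat.sSup_mem ⟨0, by simp⟩ (hIndexSet_bddAbove S)

lemma hIndex_le_card (S : Multiset ℕ) : hIndex S ≤ Multiset.card S := by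
  refine csSup_le ⟨0, by simp⟩ ?_
  intro y hy
  exact le_trans hy (Multiset.card_le_card (Multiset.filter_le _ _))

lemma filter_map_card (s : Multiset V) (g : V → ℕ) (y : ℕ) :
    ((s.map g).filter (fun x => y ≤ x)).card = (s.filter (fun w => y ≤ g w)).card := by
  rw [Multiset.filter_map]
  simp [Function.comp]

lemma hIndex_map_mono (s : Multiset V) (f g : V → ℕ) (h : ∀ w, f w ≤ g w) :
    hIndex (s.map f) ≤ hIndex (s.map g) := by
  refine le_hIndex _ _ ?_
  have h1 := hIndex_mem (s.map f)
  rw [filter_map_card] at h1 ⊢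
  refine le_trans h1 (Multiset.card_le_card ?_)
  apply Multiset.monotone_filter_right
  intro w hw
  exact le_trans hw (h w)

/-! ### triKey lemmas -/

lemma triKey_le (F : Sym2 V → ℕ) (e : Sym2 V) (w : V) {x : V} (hx : x ∈ e) :
    triKey F e w ≤ F s(x, w) :=
  Nat.sInf_le ⟨x, hx, rfl⟩

lemma le_triKey (F : Sym2 V → ℕ) (u v : V) (w : V) (c : ℕ)
    (h : ∀ x ∈ s(u, v), c ≤ F s(x, w)) : c ≤ triKey F s(u, v) w := by
  refine le_csInf ⟨F s(u, w), u, Sym2.mem_mk_left u v, rfl⟩ ?_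
  rintro m ⟨x, hx, rfl⟩
  exact h x hx

lemma triKey_mono (F F' : Sym2 V → ℕ) (h : ∀ f, F f ≤ F' f) (e : Sym2 V) (w : V) :
    triKey F e w ≤ triKey F' e w := by
  induction e using Sym2.ind with
  | _ u v =>
    have hne : {m | ∃ x ∈ s(u, v), m = F' s(x, w)}.Nonempty :=
      ⟨F' s(u, w), u, Sym2.mem_mk_left u v, rfl⟩
    obtain ⟨x, hx, hxe⟩ := Nat.sInf_mem hne
    calc triKey F s(u, v) w ≤ F s(x, w) := triKey_le F _ _ hx
      _ ≤ F' s(x, w) := h _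
      _ = sInf {m | ∃ x ∈ s(u, v), m = F' s(x, w)} := hxe.symm

/-! ### support lemmas -/

lemma commonNbrs_mono {S G : SimpleGraph V} (h : S ≤ G) (e : Sym2 V) :
    commonNbrs S e ⊆ commonNbrs G e := by
  intro w hw x hx
  exact h (hw x hx)

lemma suppE_mono [Fintype V] {S G : SimpleGraph V} (h : S ≤ G) (e : Sym2 V) :
    suppE S e ≤ suppE G e :=
  Set.ncard_le_ncard (commonNbrs_mono h e) (Set.toFinite _)

lemma suppE_le_card [Fintype V] (G : SimpleGraph V) (e : Sym2 V) :
    suppE G e ≤ Fintype.card V := by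
  have := Set.ncard_le_ncard (Set.subset_univ (commonNbrs G e)) Set.finite_univ
  simpa [suppE, Set.ncard_univ] using this

/-! ### eventually constant antitone sequences -/

lemma antitone_nat_eventually_constant (a : ℕ → ℕ) (ha : ∀ n, a (n + 1) ≤ a n) :
    ∃ N, ∀ n, N ≤ n → a n = a N := by
  have hmono : ∀ m n, m ≤ n → a n ≤ a m := by
    intro m n h
    induction h with
    | refl => exact le_refl _
    | step _ ih => exact le_trans (ha _) ih
  obtain ⟨N, hN⟩ : sInf (Set.range a) ∈ Set.range a :=
    Nat.sInf_mem (Set.range_nonempty a)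
  refine ⟨N, fun n hn => ?_⟩
  have h1 : a n ≤ a N := hmono N n hn
  have h2 : sInf (Set.range a) ≤ a n := Nat.sInf_le ⟨n, rfl⟩
  omega

/-! ### HlSup is antitone in n -/

lemma HlSup_succ_le [Fintype V] (G : SimpleGraph V) :
    ∀ n f, HlSup G (n + 1) f ≤ HlSup G n f := by
  intro n
  induction n with
  | zero =>
    intro f
    show hIndex _ ≤ suppE G f
    refine le_trans (hIndex_le_card _) ?_
    rw [Multiset.card_map]
    have h2 : (commonNbrs G f).ncard = (commonNbrs G f).toFinite.toFinset.card :=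
      Set.ncard_eq_toFinset_card _ _
    show (commonNbrs G f).toFinite.toFinset.card ≤ suppE G f
    rw [← h2]
    exact le_refl _
  | succ n ih =>
    intro f
    show hIndex _ ≤ hIndex _
    exact hIndex_map_mono _ _ _ (fun w => triKey_mono _ _ (fun g => ih g) f w)

lemma HlSup_stabilizes [Fintype V] (G : SimpleGraph V) :
    ∃ N, ∀ n, N ≤ n → ∀ f, HlSup G n f = HlSup G N f := by
  classical
  set a : ℕ → ℕ := fun n => ∑ f : Sym2 V, HlSup G n f with ha
  have haanti : ∀ n, a (n + 1) ≤ a n :=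
    fun n => Finset.sum_le_sum (fun f _ => HlSup_succ_le G n f)
  obtain ⟨N, hN⟩ := antitone_nat_eventually_constant a haanti
  have key : ∀ n, N ≤ n → ∀ f, HlSup G n f = HlSup G N f := by
    intro n hn
    induction hn with
    | refl => intro f; rfl
    | @step m hm ih =>
      -- first, HlSup (m+1) = HlSup m pointwise
      have hsum : a (m + 1) = a m := by
        rw [hN (m + 1) (le_trans hm (Nat.le_succ m)), hN m hm]
      have hpt : ∀ f, HlSup G (m + 1) f = HlSup G m f := by
        intro f
        have := (Finset.sum_eq_sum_iff_of_le
          (fun g (_ : g ∈ (Finset.univ : Finset (Sym2 V))) => HlSup_succ_le G m g)).mp hsum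
        exact this f (Finset.mem_univ f)
      intro f
      rw [hpt f, ih]
  exact ⟨N, key⟩

/-! ### trussness lemmas -/

lemma le_trussnessE [Fintype V] (G : SimpleGraph V) (k : ℕ) (T : SimpleGraph V)
    (hTG : T ≤ G) (hT : KTrussProp T k) (e : Sym2 V) (he : e ∈ T.edgeSet) :
    k ≤ trussnessE G e := by
  classical
  -- maximal k-truss-property subgraph
  set S : SimpleGraph V := sSup {U | U ≤ G ∧ KTrussProp U k} with hS
  have hSG : S ≤ G := sSup_le (fun U hU => hU.1)
  have hmemS : ∀ U, U ≤ G → KTrussProp U k → U ≤ S := fun U h1 h2 => le_sSup ⟨h1, h2⟩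
  have hSk : KTrussProp S k := by
    intro f hf
    induction f using Sym2.ind with
    | _ u v =>
      rw [SimpleGraph.mem_edgeSet, hS, SimpleGraph.sSup_adj] at hf
      obtain ⟨U, hU, hadj⟩ := hf
      have h1 : k ≤ suppE U s(u, v) + 2 := hU.2 _ (U.mem_edgeSet.mpr hadj)
      have h2 : suppE U s(u, v) ≤ suppE S s(u, v) := suppE_mono (hmemS U hU.1 hU.2) _
      omega
  have hIs : IsKTruss G S k := by
    refine ⟨hSG, hSk, fun T' h1 h2 h3 => le_antisymm (hmemS T' h1 h2) h3⟩
  have heS : e ∈ S.edgeSet := by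
    induction e using Sym2.ind with
    | _ u v =>
      rw [SimpleGraph.mem_edgeSet] at he ⊢
      exact hmemS T hTG hT he
  refine le_csSup ?_ ⟨S, hIs, heS⟩
  · refine ⟨Fintype.card V + 2, ?_⟩
    rintro m ⟨S', hS', heS'⟩
    have := hS'.2.1 _ heS'
    have := suppE_le_card S' e
    omega

lemma trussnessE_bddAbove [Fintype V] (G : SimpleGraph V) (e : Sym2 V) :
    BddAbove {k | ∃ S : SimpleGraph V, IsKTruss G S k ∧ e ∈ S.edgeSet} := by
  refine ⟨Fintype.card V + 2, ?_⟩
  rintro m ⟨S', hS', heS'⟩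
  have := hS'.2.1 _ heS'
  have := suppE_le_card S' e
  omega

lemma trussnessE_mem [Fintype V] (G : SimpleGraph V) (e : Sym2 V) (he : e ∈ G.edgeSet) :
    ∃ S : SimpleGraph V, IsKTruss G S (trussnessE G e) ∧ e ∈ S.edgeSet := by
  have hne : {k | ∃ S : SimpleGraph V, IsKTruss G S k ∧ e ∈ S.edgeSet}.Nonempty := by
    refine ⟨2, G, ⟨le_refl G, fun f _ => by omega, fun T h1 _ h3 => le_antisymm h1 h3⟩, he⟩
  exact Nat.sSup_mem hne (trussnessE_bddAbove G e)

/-! ### threshold subgraph -/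

def threshGraph (G : SimpleGraph V) (F : Sym2 V → ℕ) (m : ℕ) : SimpleGraph V where
  Adj x y := G.Adj x y ∧ m ≤ F s(x, y)
  symm := by
    constructor
    intro x y h
    refine ⟨h.1.symm, ?_⟩
    rw [Sym2.eq_swap]
    exact h.2
  loopless := ⟨fun x h => G.irrefl h.1⟩

end Aux

/-- Classical H-index convergence for `k`-truss, `h = 1`: the iterates
`H_l^(n)sup(e)` are eventually constant with limit `t(e) - 2`. -/
theorem HlSup_tendsto_trussness {V : Type*} [Fintype V] (G : SimpleGraph V)
    (e : Sym2 V) (he : e ∈ G.edgeSet) :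
    ∃ N : ℕ, ∀ n, N ≤ n → HlSup G n e = trussnessE G e - 2 := by
  classical
  obtain ⟨N, hN⟩ := HlSup_stabilizes G
  set k := trussnessE G e with hk
  obtain ⟨T, hT, heT⟩ := trussnessE_mem G e he
  -- Lower bound: k - 2 ≤ HlSup G n f for every edge f of T
  have lower : ∀ n, ∀ f ∈ T.edgeSet, k - 2 ≤ HlSup G n f := by
    intro n
    induction n with
    | zero =>
      intro f hf
      have h1 : k ≤ suppE T f + 2 := hT.2.1 f hf
      have h2 : suppE T f ≤ suppE G f := suppE_mono hT.1 f
      show k - 2 ≤ suppE G f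
      omega
    | succ n ih =>
      intro f hf
      show k - 2 ≤ hIndex ((commonNbrs G f).toFinite.toFinset.val.map (triKey (HlSup G n) f))
      refine le_hIndex _ _ ?_
      rw [filter_map_card]
      set B := (commonNbrs G f).toFinite.toFinset with hB
      set A := (commonNbrs T f).toFinite.toFinset with hA
      have hAB : A ⊆ B.filter (fun w => k - 2 ≤ triKey (HlSup G n) f w) := by
        intro w hw
        rw [hA, Set.Finite.mem_toFinset] at hw
        rw [Finset.mem_filter]
        constructor
        · rw [hB, Set.Finite.mem_toFinset]
          exact commonNbrs_mono hT.1 f hw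
        · induction f using Sym2.ind with
          | _ u v =>
            refine le_triKey _ _ _ _ _ ?_
            intro x hx
            have hadj : T.Adj x w := hw x hx
            exact ih s(x, w) (T.mem_edgeSet.mpr hadj)
      have hcardA : k - 2 ≤ A.card := by
        have h1 : k ≤ suppE T f + 2 := hT.2.1 f hf
        have h2 : A.card = suppE T f := by
          rw [hA]
          exact (Set.ncard_eq_toFinset_card _ _).symm
        omega
      calc k - 2 ≤ A.card := hcardA
        _ ≤ (B.filter (fun w => k - 2 ≤ triKey (HlSup G n) f w)).card :=
            Finset.card_le_card hAB
        _ = (B.val.filter (fun w => k - 2 ≤ triKey (HlSup G n) f w)).card := rfl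
  -- the limit function
  set F : Sym2 V → ℕ := HlSup G N with hF
  have hfix : ∀ f, F f = hIndex ((commonNbrs G f).toFinite.toFinset.val.map (triKey F f)) := by
    intro f
    have h1 : HlSup G (N + 1) f = F f := hN (N + 1) (Nat.le_succ N) f
    rw [← h1]
    rfl
  -- Upper bound: F e ≤ k - 2 via the threshold subgraph
  set m := F e with hm
  set H : SimpleGraph V := threshGraph G F m with hH
  have hHG : H ≤ G := fun x y h => (show G.Adj x y ∧ m ≤ F s(x, y) from h).1
  have hHprop : KTrussProp H (m + 2) := by
    intro f hf
    have hfG : f ∈ G.edgeSet := (SimpleGraph.edgeSet_mono hHG) hf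
    have hfm : m ≤ F f := by
      induction f using Sym2.ind with
      | _ u v => exact (show G.Adj u v ∧ m ≤ F s(u, v) from H.mem_edgeSet.mp hf).2
    have h1 : F f ≤ ((((commonNbrs G f).toFinite.toFinset.val.map (triKey F f))).filter
        (fun x => F f ≤ x)).card := by
      have h0 := hIndex_mem ((commonNbrs G f).toFinite.toFinset.val.map (triKey F f))
      rwa [← hfix f] at h0
    rw [filter_map_card] at h1
    set B := (commonNbrs G f).toFinite.toFinset with hB
    set C := B.filter (fun w => F f ≤ triKey F f w) with hC
    have hCsub : (↑C : Set V) ⊆ commonNbrs H f := by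
      intro w hw
      rw [Finset.mem_coe, hC, Finset.mem_filter] at hw
      obtain ⟨hwB, hwkey⟩ := hw
      rw [hB, Set.Finite.mem_toFinset] at hwB
      intro x hx
      refine (⟨hwB x hx, ?_⟩ : G.Adj x w ∧ m ≤ F s(x, w))
      calc m ≤ F f := hfm
        _ ≤ triKey F f w := hwkey
        _ ≤ F s(x, w) := triKey_le F f w hx
    have h2 : C.card ≤ suppE H f := by
      rw [← Set.ncard_coe_finset C]
      exact Set.ncard_le_ncard hCsub (Set.toFinite _)
    have h3 : C.card = (B.val.filter (fun w => F f ≤ triKey F f w)).card := rfl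
    omega
  have heH : e ∈ H.edgeSet := by
    induction e using Sym2.ind with
    | _ u v =>
      rw [SimpleGraph.mem_edgeSet] at he ⊢
      exact (⟨he, le_refl _⟩ : G.Adj u v ∧ m ≤ F s(u, v))
  have hub : m + 2 ≤ k := le_trussnessE G (m + 2) H hHG hHprop e heH
  have hlb : k - 2 ≤ m := lower N e heT
  refine ⟨N, fun n hn => ?_⟩
  rw [hN n hn e]
  show m = k - 2
  omega
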